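/- Let C = k[z,w]/(z²+z³+w²) and let C' = k[t] be a C-module via the k-algebra homomorphism α: C → k[t] with α(z) = −t²−1, α(w) = −t³−t. The kernel of the surjective C-linear map C² → C' given by (a,b) ↦ α(a) − α(b)·t is isomorphic to C' as a C-module; hence there is a short exact sequence of C-modules 0 → C' → C² → C' → 0. -/

import Mathlib

/-! `α` identifies `C` with the subring `k + (t² + 1)·k[t]` of `k[t]`, whose conductor is
`t² + 1`. For injectivity: modulo `z² + z³ + w²` every polynomial is `r₀(z) + r₁(z)·w`, and `α`
sends `r₀(z)` to an even polynomial in `t` and `r₁(z)·w` to an odd one, so both must vanish. For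
`(a, b)` in the kernel, `α(a) = α(b)·t`; reducing mod `t² + 1` (where `α` becomes the value at the
node) forces `t² + 1 ∣ α(b)`, so `(a, b) ↦ α(b)` identifies the kernel with the conductor
`(t² + 1)·k[t] ≅ k[t]`. -/

set_option synthInstance.maxHeartbeats 1000000
set_option maxHeartbeats 1000000

noncomputable section

/-- The polynomial `z² + z³ + w²` in `k[z,w]`, where `z = X 0` and `w = X 1`. -/
abbrev pC (k : Type*) [Field k] : MvPolynomial (Fin 2) k :=
  MvPolynomial.X 0 ^ 2 + MvPolynomial.X 0 ^ 3 + MvPolynomial.X 1 ^ 2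

/-- `C = k[z,w]/(z²+z³+w²)`, the coordinate ring of a nodal affine cubic. -/
abbrev C (k : Type*) [Field k] : Type _ :=
  MvPolynomial (Fin 2) k ⧸ Ideal.span {pC k}

/-- The `k`-algebra map `k[z,w] → k[t]` with `z ↦ −t²−1`, `w ↦ −t³−t`. -/
def fC (k : Type*) [Field k] : MvPolynomial (Fin 2) k →ₐ[k] Polynomial k :=
  MvPolynomial.aeval ![-(Polynomial.X ^ 2) - 1, -(Polynomial.X ^ 3) - Polynomial.X]

lemma fC_pC (k : Type*) [Field k] : fC k (pC k) = 0 := by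
  simp [fC, pC]
  ring

/-- The induced `k`-algebra map `α : C → k[t]` (normalization of the nodal cubic). -/
def αC (k : Type*) [Field k] : C k →ₐ[k] Polynomial k :=
  Ideal.Quotient.liftₐ (Ideal.span {pC k}) (fC k) (by
    intro a ha
    have h : Ideal.span {pC k} ≤ RingHom.ker (fC k).toRingHom := by
      rw [Ideal.span_le, Set.singleton_subset_iff, SetLike.mem_coe, RingHom.mem_ker]
      exact fC_pC k
    exact RingHom.mem_ker.mp (h ha))

/-- `C' = k[t]` as a `C`-module via `α`. -/
instance algC (k : Type*) [Field k] : Algebra (C k) (Polynomial k) :=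
  (αC k).toRingHom.toAlgebra

/-- The `C`-linear map `C² → C' = k[t]`, `(a,b) ↦ α(a) − α(b)·t`. -/
def gC (k : Type*) [Field k] : (C k × C k) →ₗ[C k] Polynomial k :=
  (Algebra.linearMap (C k) (Polynomial k)).comp (LinearMap.fst _ _ _) -
    (LinearMap.mulRight (C k) (Polynomial.X : Polynomial k)).comp
      ((Algebra.linearMap (C k) (Polynomial k)).comp (LinearMap.snd _ _ _))

open Polynomial

theorem eq_zero_of_expand_two_add_X_mul_expand_two {R : Type*} [CommSemiring R] {A B : R[X]}
    (h : expand R 2 A + X * expand R 2 B = 0) : A = 0 ∧ B = 0 := by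
  constructor <;> ext n
  · have := congrArg (coeff · (2 * n)) h
    rcases n with _ | n
    · simpa [coeff_expand two_pos] using this
    · simpa [mul_add, coeff_X_mul, coeff_expand two_pos, Nat.two_dvd_ne_zero] using this
  · have := congrArg (coeff · (2 * n + 1)) h
    simpa [coeff_X_mul, coeff_expand two_pos, Nat.two_dvd_ne_zero] using this

theorem aeval_neg_X_sub_one_involutive {R : Type*} [CommRing R] :
    Function.Involutive (aeval (R := R) (-X - 1 : R[X])) := fun r => by
  rw [← aeval_algHom_apply]
  simp

lemma X_sq_add_one_monic {R : Type*} [CommRing R] : (X ^ 2 + 1 : R[X]).Monic :=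
  monic_X_pow_add_C 1 two_ne_zero

lemma degree_X_sq_add_one {R : Type*} [CommRing R] [Nontrivial R] :
    (X ^ 2 + 1 : R[X]).degree = 2 := by
  compute_degree!

lemma eq_zero_of_X_sq_add_one_dvd_linear {R : Type*} [CommRing R] [IsDomain R] {a b : R}
    (h : X ^ 2 + 1 ∣ C a * X + C b) : a = 0 ∧ b = 0 := by
  have h0 := eq_zero_of_dvd_of_degree_lt h (by
    rw [degree_X_sq_add_one]; exact degree_linear_lt)
  exact ⟨by simpa using congrArg (coeff · 1) h0, by simpa using congrArg (coeff · 0) h0⟩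

section

variable {k : Type*} [Field k]

lemma exists_eq_pC_mul_add (q : MvPolynomial (Fin 2) k) :
    ∃ (s : MvPolynomial (Fin 2) k) (r₀ r₁ : k[X]), q = pC k * s + aeval (MvPolynomial.X 0) r₀ +
      aeval (MvPolynomial.X 0) r₁ * MvPolynomial.X 1 := by
  induction q using MvPolynomial.induction_on with
  | C a => exact ⟨0, Polynomial.C a, 0, by simp [MvPolynomial.algebraMap_eq]⟩
  | add p q hp hq =>
    obtain ⟨s, r₀, r₁, rfl⟩ := hp
    obtain ⟨s', r₀', r₁', rfl⟩ := hq
    exact ⟨s + s', r₀ + r₀', r₁ + r₁', by simp only [map_add]; ring⟩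
  | mul_X p i hp =>
    obtain ⟨s, r₀, r₁, rfl⟩ := hp
    fin_cases i
    · refine ⟨s * MvPolynomial.X 0, r₀ * X, r₁ * X, ?_⟩
      simp only [Fin.zero_eta, map_mul, aeval_X]
      ring
    · refine ⟨s * MvPolynomial.X 1 + aeval (MvPolynomial.X 0) r₁, -(X ^ 2 + X ^ 3) * r₁, r₀, ?_⟩
      simp only [Fin.mk_one, map_neg, map_add, map_pow, map_mul, aeval_X, pC]
      ring

lemma fC_aeval_X_zero (r : k[X]) :
    fC k (aeval (MvPolynomial.X 0) r) = expand k 2 (aeval (-X - 1) r) := by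
  rw [← aeval_algHom_apply, ← aeval_algHom_apply]
  simp [fC]

lemma fC_X_one : fC k (MvPolynomial.X 1) = X * expand k 2 (-X - 1) := by
  simp [fC]
  ring

lemma mem_span_pC_of_fC_eq_zero {q : MvPolynomial (Fin 2) k} (hq : fC k q = 0) :
    q ∈ Ideal.span {pC k} := by
  obtain ⟨s, r₀, r₁, rfl⟩ := exists_eq_pC_mul_add q
  have h : expand k 2 (aeval (-X - 1) r₀) + X * expand k 2 (aeval (-X - 1) r₁ * (-X - 1)) = 0 := by
    rw [← hq, map_add, map_add, map_mul (fC k) (pC k), fC_pC, map_mul (fC k), fC_aeval_X_zero,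
      fC_aeval_X_zero, fC_X_one, map_mul]
    ring
  obtain ⟨h₀, h₁⟩ := eq_zero_of_expand_two_add_X_mul_expand_two h
  have hσ : (-X - 1 : k[X]) ≠ 0 := fun h => by simpa using congrArg (eval 0) h
  have hr₀ : r₀ = 0 := aeval_neg_X_sub_one_involutive.injective (by rw [h₀, map_zero])
  have hr₁ : r₁ = 0 := aeval_neg_X_sub_one_involutive.injective
    (by rw [(mul_eq_zero.mp h₁).resolve_right hσ, map_zero])
  simp [hr₀, hr₁, Ideal.mem_span_singleton]

lemma αC_mk (q : MvPolynomial (Fin 2) k) : αC k (Ideal.Quotient.mk _ q) = fC k q := rfl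

lemma αC_injective : Function.Injective (αC k) := by
  rw [injective_iff_map_eq_zero]
  intro a ha
  obtain ⟨q, rfl⟩ := Ideal.Quotient.mk_surjective a
  exact Ideal.Quotient.eq_zero_iff_mem.mpr (mem_span_pC_of_fC_eq_zero (by rwa [αC_mk] at ha))

-- Modulo the conductor `t² + 1`, `α` is evaluation at the node `z = w = 0`.
lemma mkₐ_comp_fC : (Ideal.Quotient.mkₐ k (Ideal.span {(X ^ 2 + 1 : k[X])})).comp (fC k) =
    (Algebra.ofId k _).comp (MvPolynomial.aeval 0) := by
  have hX : Ideal.Quotient.mk (Ideal.span {(X ^ 2 + 1 : k[X])}) X ^ 2 = -1 := by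
    rw [← map_pow, eq_neg_iff_add_eq_zero, ← map_one (Ideal.Quotient.mk _), ← map_add,
      Ideal.Quotient.mk_singleton_self]
  refine MvPolynomial.algHom_ext fun i => ?_
  fin_cases i
  · simp [fC, hX]
  · simp [fC]
    linear_combination (-Ideal.Quotient.mk _ X) * hX

lemma exists_X_sq_add_one_dvd_αC_sub_C (a : C k) : ∃ c : k, X ^ 2 + 1 ∣ αC k a - C c := by
  obtain ⟨q, rfl⟩ := Ideal.Quotient.mk_surjective a
  refine ⟨MvPolynomial.aeval 0 q, ?_⟩
  rw [← Ideal.mem_span_singleton, ← Ideal.Quotient.eq, αC_mk]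
  exact DFunLike.congr_fun mkₐ_comp_fC q

lemma X_sq_add_one_mul_X_pow_mem_range (n : ℕ) : (X ^ 2 + 1) * X ^ n ∈ (αC k).range := by
  have hz : (X ^ 2 + 1 : k[X]) ∈ (αC k).range := ⟨-Ideal.Quotient.mk _ (MvPolynomial.X 0),
    show αC k _ = _ by rw [map_neg, αC_mk]; simp [fC]; ring⟩
  have hw : (X ^ 2 + 1 : k[X]) * X ∈ (αC k).range := ⟨-Ideal.Quotient.mk _ (MvPolynomial.X 1),
    show αC k _ = _ by rw [map_neg, αC_mk]; simp [fC]; ring⟩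
  induction n using Nat.twoStepInduction with
  | zero => simpa using hz
  | one => simpa using hw
  | more n hn _ =>
    rw [show (X ^ 2 + 1 : k[X]) * X ^ (n + 2) = (X ^ 2 + 1) * X ^ n * ((X ^ 2 + 1) - 1) by ring]
    exact mul_mem hn (sub_mem hz (one_mem _))

lemma X_sq_add_one_mul_mem_range (h : k[X]) : (X ^ 2 + 1) * h ∈ (αC k).range := by
  induction h using Polynomial.induction_on' with
  | add p q hp hq => rw [mul_add]; exact add_mem hp hq
  | monomial n a =>
    rw [← C_mul_X_pow_eq_monomial, mul_left_comm, ← algebraMap_eq]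
    exact mul_mem (Subalgebra.algebraMap_mem _ a) (X_sq_add_one_mul_X_pow_mem_range n)

lemma gC_apply (a b : C k) : gC k (a, b) = αC k a - αC k b * X := rfl

lemma mem_ker_gC {a b : C k} : (a, b) ∈ LinearMap.ker (gC k) ↔ αC k a = αC k b * X := by
  rw [LinearMap.mem_ker, gC_apply, sub_eq_zero]

lemma gC_surjective : Function.Surjective (gC k) := by
  intro f
  have hr := eq_X_add_C_of_degree_le_one (Order.le_of_lt_succ
    (degree_X_sq_add_one (R := k) ▸ degree_modByMonic_lt f X_sq_add_one_monic))
  obtain ⟨a, ha⟩ := X_sq_add_one_mul_mem_range (f /ₘ (X ^ 2 + 1))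
  set c₁ := (f %ₘ (X ^ 2 + 1)).coeff 1
  set c₀ := (f %ₘ (X ^ 2 + 1)).coeff 0
  refine ⟨(a + algebraMap k (C k) c₀, -algebraMap k (C k) c₁), ?_⟩
  rw [gC_apply, map_add, map_neg, AlgHom.commutes, AlgHom.commutes, show αC k a = _ from ha,
    algebraMap_eq]
  linear_combination modByMonic_add_div f (X ^ 2 + 1) - hr

lemma X_sq_add_one_dvd_αC_of_mem_ker {a b : C k} (h : (a, b) ∈ LinearMap.ker (gC k)) :
    X ^ 2 + 1 ∣ αC k b := by
  obtain ⟨ca, hca⟩ := exists_X_sq_add_one_dvd_αC_sub_C a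
  obtain ⟨cb, hcb⟩ := exists_X_sq_add_one_dvd_αC_sub_C b
  have hdvd : X ^ 2 + 1 ∣ C cb * X + C (-ca) := by
    convert dvd_sub hca (dvd_mul_of_dvd_left hcb X) using 1
    rw [mem_ker_gC.mp h, map_neg]
    ring
  obtain ⟨rfl, -⟩ := eq_zero_of_X_sq_add_one_dvd_linear hdvd
  simpa using hcb

def kerGCToPolynomial : LinearMap.ker (gC k) →ₗ[C k] k[X] :=
  Algebra.linearMap (C k) k[X] ∘ₗ LinearMap.snd (C k) (C k) (C k) ∘ₗ (LinearMap.ker (gC k)).subtype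

lemma kerGCToPolynomial_injective : Function.Injective (kerGCToPolynomial (k := k)) := by
  rintro ⟨⟨a, b⟩, hab⟩ ⟨⟨a', b'⟩, hab'⟩ h
  obtain rfl : b = b' := αC_injective h
  obtain rfl : a = a' := αC_injective (by rw [mem_ker_gC.mp hab, mem_ker_gC.mp hab'])
  rfl

lemma range_kerGCToPolynomial : LinearMap.range kerGCToPolynomial =
    LinearMap.range (LinearMap.mulLeft (C k) (X ^ 2 + 1 : k[X])) := by
  ext f
  simp only [LinearMap.mem_range, LinearMap.mulLeft_apply]
  constructor
  · rintro ⟨⟨⟨a, b⟩, hab⟩, rfl⟩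
    obtain ⟨h, hh⟩ := X_sq_add_one_dvd_αC_of_mem_ker hab
    exact ⟨h, hh.symm⟩
  · rintro ⟨h, rfl⟩
    obtain ⟨b, hb⟩ := X_sq_add_one_mul_mem_range h
    obtain ⟨a, ha⟩ := X_sq_add_one_mul_mem_range (h * X)
    exact ⟨⟨(a, b), mem_ker_gC.mpr (by rw [show αC k a = _ from ha, show αC k b = _ from hb,
      mul_assoc])⟩, hb⟩

end

theorem stmt8_general (k : Type*) [Field k] :
    Function.Surjective (gC k) ∧
    Nonempty (LinearMap.ker (gC k) ≃ₗ[C k] Polynomial k) :=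
  ⟨gC_surjective, ⟨(LinearEquiv.ofInjective _ kerGCToPolynomial_injective).trans
    ((LinearEquiv.ofEq _ _ range_kerGCToPolynomial).trans
      (LinearEquiv.ofInjective _ (mul_right_injective₀ X_sq_add_one_monic.ne_zero)).symm)⟩⟩

/-- The surjective `C`-linear map `C² → C' = k[t]`, `(a,b) ↦ α(a) − α(b)·t`, has kernel
isomorphic to `C'` as a `C`-module; hence there is a short exact sequence
`0 → C' → C² → C' → 0`. -/
theorem stmt8 (k : Type*) [Field k] [IsAlgClosed k] [CharZero k] :
    Function.Surjective (gC k) ∧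
    Nonempty (LinearMap.ker (gC k) ≃ₗ[C k] Polynomial k) :=
  stmt8_general k
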